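/- Let G be a locally profinite group, k a commutative ring with 1, and π a smooth k-representation of G, regarded as discrete. Then applying the smooth-vectors functor to the continuous cochain complex yields an exact resolution 0 → π → C^0(G,π)^sm → C^1(G,π)^sm → ⋯ of π in the category Mod^sm_G(k) of smooth k-representations of G. -/

import Mathlib

/-!
The complex `C^•(G, π)` of continuous cochains is contractible by the cone `f ↦ f(1, ·)`, but
the cone does not preserve smooth vectors: `f(g, x) = f(1, x)` for `g` near `1` holds
uniformly only for `x` in a compact set. If `f` is fixed by a compact open subgroup `K`, let
`σ : G → K` be a locally constant retraction with `σ(k g) = k σ(g)`. The prism operator `P`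
between the identity and `σ^*` satisfies `dP + Pd = 1 - σ^*`, so `P + C σ^*` is again a
contracting homotopy. It maps `f` to a smooth cochain: `P` commutes with the action of `K`, and
`C σ^* f` evaluates `f` only at points `(1, z)` with `z ∈ K^{n+1}`, where a small compact open
subgroup acts trivially on the first coordinate.
-/

open scoped BigOperators

namespace CtsCoh

/-- A locally profinite group: a topological group admitting a fundamental system of
neighborhoods of the identity consisting of compact open subgroups. -/
def LocallyProfinite (G : Type*) [Group G] [TopologicalSpace G] : Prop :=
  ∀ U ∈ nhds (1 : G), ∃ K : Subgroup G,
    IsCompact (K : Set G) ∧ IsOpen (K : Set G) ∧ (K : Set G) ⊆ U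

variable (G : Type*) [Group G] [TopologicalSpace G]
variable (V : Type*) [AddCommGroup V] [TopologicalSpace V] [DistribMulAction G V]

/-- The action of `G` on cochains: `(g • f)(g₀, …, gₙ) = g • f(g⁻¹g₀, …, g⁻¹gₙ)`. -/
def cAct {n : ℕ} (g : G) (f : (Fin n → G) → V) : (Fin n → G) → V :=
  fun x => g • f (fun i => g⁻¹ * x i)

/-- The differential of the complex of continuous cochains. -/
def dmap (n : ℕ) (f : (Fin (n + 1) → G) → V) : (Fin (n + 2) → G) → V :=
  fun x => ∑ i : Fin (n + 2), ((-1 : ℤ) ^ (i : ℕ)) • f (fun j => x (i.succAbove j))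

/-- A cochain `f ∈ C^n(G,V)` is a smooth vector, i.e. lies in `C^n(G,V)^sm = colim_K C^n(G,V)^K`
(the colimit being over compact open subgroups `K ≤ G`), iff it is continuous and fixed
by some compact open subgroup of `G`. -/
def IsSmoothCochain {n : ℕ} (f : (Fin (n + 1) → G) → V) : Prop :=
  Continuous f ∧ ∃ K : Subgroup G, IsCompact (K : Set G) ∧ IsOpen (K : Set G) ∧
    ∀ g ∈ K, cAct G V g f = f

/-- The augmentation `π → C^0(G,π)`, `v ↦ (g ↦ v)`. -/
def aug (v : V) : (Fin 1 → G) → V := fun _ => v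


open CategoryTheory Finset Filter Topology

section Tuples

variable {G : Type*}

def face {m : ℕ} (x : Fin (m + 1) → G) (l : ℕ) : Fin m → G :=
  fun t => x (if (t : ℕ) < l then t.castSucc else t.succ)

/-- `(σ x₀, …, σ xⱼ, xⱼ, …, xₘ)`, the `j`-th simplex of the prism between `x` and `σ ∘ x`
(for `j ≤ m`; the `min` only keeps the index in range). -/
def prismTuple (σ : G → G) {m : ℕ} (j : ℕ) (x : Fin (m + 1) → G) : Fin (m + 2) → G :=
  fun i => if (i : ℕ) ≤ j then σ (x ⟨min i m, by omega⟩) else x ⟨i - 1, by omega⟩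

theorem face_cons_zero {m : ℕ} (a : G) (x : Fin (m + 1) → G) :
    face (Fin.cons a x : Fin (m + 2) → G) 0 = x := by
  funext t
  simp [face]

theorem face_cons_succ {m : ℕ} (a : G) (x : Fin (m + 2) → G) (l : ℕ) :
    face (Fin.cons a x : Fin (m + 3) → G) (l + 1) = Fin.cons a (face x l) := by
  funext t
  cases t using Fin.cases with
  | zero => simp [face]
  | succ t =>
    simp only [face, Fin.cons_succ, Fin.val_succ, Nat.succ_lt_succ_iff]
    split_ifs <;> rfl

theorem face_prismTuple_zero (σ : G → G) {m : ℕ} (x : Fin (m + 1) → G) :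
    face (prismTuple σ 0 x) 0 = x := by
  funext t
  simp [face, prismTuple]

theorem face_prismTuple_last (σ : G → G) {m : ℕ} (x : Fin (m + 1) → G) :
    face (prismTuple σ m x) (m + 1) = σ ∘ x := by
  funext t
  simp [face, prismTuple, t.isLt, show (t : ℕ) ≤ m by omega]

theorem face_prismTuple_succ (σ : G → G) {m : ℕ} (j : ℕ) (x : Fin (m + 1) → G) :
    face (prismTuple σ j x) (j + 1) = face (prismTuple σ (j + 1) x) (j + 1) := by
  funext ⟨t, ht⟩
  simp only [face, prismTuple, Fin.castSucc_mk, Fin.succ_mk, apply_ite Fin.val]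
  grind

theorem face_prismTuple_of_le (σ : G → G) {m i j : ℕ} (hij : i ≤ j) (hj : j ≤ m)
    (x : Fin (m + 2) → G) :
    face (prismTuple σ (j + 1) x) i = prismTuple σ j (face x i) := by
  funext ⟨t, ht⟩
  simp only [face, prismTuple, Fin.castSucc_mk, Fin.succ_mk, apply_ite Fin.val]
  grind

theorem face_prismTuple_of_lt (σ : G → G) {m i j : ℕ} (hji : j < i) (hi : i ≤ m + 1)
    (x : Fin (m + 2) → G) :
    face (prismTuple σ j x) (i + 1) = prismTuple σ j (face x i) := by
  funext ⟨t, ht⟩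
  simp only [face, prismTuple, Fin.castSucc_mk, Fin.succ_mk, apply_ite Fin.val]
  grind

theorem prismTuple_comp_left {σ τ : G → G} (hστ : ∀ y, σ (τ y) = τ (σ y)) {m : ℕ} (j : ℕ)
    (x : Fin (m + 1) → G) :
    prismTuple σ j (fun i => τ (x i)) = fun i => τ (prismTuple σ j x i) := by
  funext i
  simp only [prismTuple]
  split_ifs <;> simp only [hστ]

theorem continuous_prismTuple [TopologicalSpace G] {σ : G → G} (hσ : Continuous σ) {m : ℕ}
    (j : ℕ) : Continuous (prismTuple σ j : (Fin (m + 1) → G) → Fin (m + 2) → G) := by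
  refine continuous_pi fun i => ?_
  by_cases h : (i : ℕ) ≤ j
  · simp only [prismTuple, if_pos h]
    exact hσ.comp (continuous_apply _)
  · simp only [prismTuple, if_neg h]
    exact continuous_apply _

end Tuples

section AlternatingSums

variable {M : Type*} [AddCommGroup M]

theorem sum_range_eq_add_add_add (f : ℕ → M) (j r : ℕ) :
    ∑ i ∈ range (j + 2 + r), f i =
      ∑ i ∈ range j, f i + (f j + f (j + 1)) + ∑ k ∈ range r, f (j + 2 + k) := by
  rw [sum_range_add, sum_range_succ, sum_range_succ, add_assoc (∑ i ∈ range j, f i)]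

theorem sum_prism_eq_neg_offDiag (m : ℕ) (a b : ℕ → ℕ → M)
    (h_le : ∀ i j, i ≤ j → j ≤ m → b (j + 1) i = a i j)
    (h_lt : ∀ i j, j < i → i ≤ m + 1 → b j (i + 1) = a i j) :
    ∑ l ∈ range (m + 2), ∑ j ∈ range (m + 1), (-1 : ℤ) ^ (l + j) • a l j =
      -(∑ j ∈ range (m + 2), ∑ i ∈ range j, (-1 : ℤ) ^ (j + i) • b j i +
        ∑ j ∈ range (m + 2),
          ∑ k ∈ range (m + 1 - j), (-1 : ℤ) ^ (j + (j + 2 + k)) • b j (j + 2 + k)) := by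
  have lower : ∑ j ∈ range (m + 2), ∑ i ∈ range j, (-1 : ℤ) ^ (j + i) • b j i =
      -∑ j ∈ range (m + 1), ∑ i ∈ range (j + 1), (-1 : ℤ) ^ (i + j) • a i j := by
    rw [sum_range_succ', sum_range_zero, add_zero, ← sum_neg_distrib]
    refine sum_congr rfl fun j hj => ?_
    rw [← sum_neg_distrib]
    refine sum_congr rfl fun i hi => ?_
    rw [mem_range] at hi hj
    rw [h_le i j (by omega) (by omega), show j + 1 + i = i + j + 1 by ring, pow_succ,
      mul_neg_one, neg_smul]
  have upper : ∑ j ∈ range (m + 2),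
      ∑ k ∈ range (m + 1 - j), (-1 : ℤ) ^ (j + (j + 2 + k)) • b j (j + 2 + k) =
      -∑ j ∈ range (m + 1),
        ∑ k ∈ range (m + 1 - j), (-1 : ℤ) ^ (j + 1 + k + j) • a (j + 1 + k) j := by
    rw [sum_range_succ, Nat.sub_self, sum_range_zero, add_zero, ← sum_neg_distrib]
    refine sum_congr rfl fun j hj => ?_
    rw [← sum_neg_distrib]
    refine sum_congr rfl fun k hk => ?_
    rw [mem_range] at hk hj
    rw [show j + 2 + k = j + 1 + k + 1 by ring, h_lt (j + 1 + k) j (by omega) (by omega),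
      show j + (j + 1 + k + 1) = j + 1 + k + j + 1 by ring, pow_succ, mul_neg_one, neg_smul]
  rw [lower, upper, ← neg_add, neg_neg, ← sum_add_distrib, sum_comm]
  refine sum_congr rfl fun j hj => ?_
  rw [mem_range] at hj
  rw [show m + 2 = j + 1 + (m + 1 - j) by omega,
    sum_range_add (fun l => (-1 : ℤ) ^ (l + j) • a l j) (j + 1)]

/-- The alternating-sum identity behind `dP + Pd = 1 - σ^*`: `a l j` stands for the
`j`-th prism simplex over the `l`-th face, `b j i` for the `i`-th face of the `j`-th
prism simplex. Only the faces `i = j, j + 1` survive, and they telescope. -/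
theorem sum_prism_homotopy (m : ℕ) (a b : ℕ → ℕ → M)
    (h_le : ∀ i j, i ≤ j → j ≤ m → b (j + 1) i = a i j)
    (h_lt : ∀ i j, j < i → i ≤ m + 1 → b j (i + 1) = a i j)
    (h_succ : ∀ j, b j (j + 1) = b (j + 1) (j + 1)) :
    ∑ l ∈ range (m + 2), (-1 : ℤ) ^ l • ∑ j ∈ range (m + 1), (-1 : ℤ) ^ j • a l j +
      ∑ j ∈ range (m + 2), (-1 : ℤ) ^ j • ∑ i ∈ range (m + 3), (-1 : ℤ) ^ i • b j i =
    b 0 0 - b (m + 1) (m + 2) := by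
  simp only [smul_sum, smul_smul, ← pow_add]
  have split : ∀ j ∈ range (m + 2), ∑ i ∈ range (m + 3), (-1 : ℤ) ^ (j + i) • b j i =
      ∑ i ∈ range j, (-1 : ℤ) ^ (j + i) • b j i + (b j j - b j (j + 1)) +
        ∑ k ∈ range (m + 1 - j), (-1 : ℤ) ^ (j + (j + 2 + k)) • b j (j + 2 + k) := by
    intro j hj
    rw [mem_range] at hj
    have even : (-1 : ℤ) ^ (j + j) = 1 := Even.neg_one_pow ⟨j, rfl⟩
    have odd : (-1 : ℤ) ^ (j + (j + 1)) = -1 := Odd.neg_one_pow ⟨j, by ring⟩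
    rw [show m + 3 = j + 2 + (m + 1 - j) by omega, sum_range_eq_add_add_add, even, odd,
      one_smul, neg_one_zsmul, sub_eq_add_neg]
  have telescope : ∑ j ∈ range (m + 2), (b j j - b j (j + 1)) = b 0 0 - b (m + 1) (m + 2) := by
    simp only [h_succ]
    exact sum_range_sub' (fun j => b j j) (m + 2)
  rw [sum_congr rfl split, sum_add_distrib, sum_add_distrib, telescope,
    sum_prism_eq_neg_offDiag m a b h_le h_lt]
  abel

end AlternatingSums

section Homotopy

universe u v

variable {G : Type u} {V : Type v} [AddCommGroup V]

/-- `dmap` is the differential of the alternating coface map complex of this cosimplicial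
group, which gives `d ∘ d = 0`. -/
def cochainsCosimplicial (G : Type u) (V : Type v) [AddCommGroup V] :
    SimplexCategory ⥤ AddCommGrpCat.{max u v} where
  obj n := AddCommGrpCat.of ((Fin (n.len + 1) → G) → V)
  map α := AddCommGrpCat.ofHom
    { toFun := fun F x => F (x ∘ α.toOrderHom)
      map_zero' := rfl
      map_add' := fun _ _ => rfl }

theorem dmap_eq_objD (n : ℕ) (F : (Fin (n + 1) → G) → V) :
    dmap G V n F = (AlgebraicTopology.AlternatingCofaceMapComplex.objD
      (cochainsCosimplicial G V) n).hom F := by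
  funext x
  simp only [AlgebraicTopology.AlternatingCofaceMapComplex.objD,
    ← AddCommGrpCat.homAddEquiv_apply, map_sum]
  erw [AddMonoidHom.finsetSum_apply, Finset.sum_apply]
  rfl

theorem dmap_dmap (n : ℕ) (F : (Fin (n + 1) → G) → V) :
    dmap G V (n + 1) (dmap G V n F) = 0 := by
  rw [dmap_eq_objD, dmap_eq_objD]
  exact congrArg (fun φ => AddCommGrpCat.Hom.hom φ F)
    (AlgebraicTopology.AlternatingCofaceMapComplex.d_squared (cochainsCosimplicial G V) n)

theorem dmap_apply (n : ℕ) (F : (Fin (n + 1) → G) → V) (x : Fin (n + 2) → G) :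
    dmap G V n F x = ∑ l ∈ range (n + 2), (-1 : ℤ) ^ l • F (face x l) := by
  rw [dmap, ← Fin.sum_univ_eq_sum_range (fun l => (-1 : ℤ) ^ l • F (face x l))]
  rfl

theorem dmap_add (n : ℕ) (F F' : (Fin (n + 1) → G) → V) :
    dmap G V n (F + F') = dmap G V n F + dmap G V n F' := by
  funext x
  simp only [dmap_apply, Pi.add_apply, smul_add, sum_add_distrib]

theorem dmap_comp_left (n : ℕ) (σ : G → G) (F : (Fin (n + 1) → G) → V) :
    dmap G V n (fun x => F (σ ∘ x)) = fun x => dmap G V n F (σ ∘ x) :=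
  rfl

def cone [One G] {m : ℕ} (F : (Fin (m + 2) → G) → V) : (Fin (m + 1) → G) → V :=
  fun x => F (Fin.cons 1 x)

def prism (σ : G → G) {m : ℕ} (F : (Fin (m + 2) → G) → V) : (Fin (m + 1) → G) → V :=
  fun x => ∑ j ∈ range (m + 1), (-1 : ℤ) ^ j • F (prismTuple σ j x)

def contraction [One G] (σ : G → G) {m : ℕ} (F : (Fin (m + 2) → G) → V) :
    (Fin (m + 1) → G) → V :=
  prism σ F + cone (fun x => F (σ ∘ x))

theorem dmap_cone_add_cone_dmap [One G] {m : ℕ} (F : (Fin (m + 2) → G) → V) :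
    dmap G V m (cone F) + cone (dmap G V (m + 1) F) = F := by
  funext x
  simp only [Pi.add_apply, cone, dmap_apply, sum_range_succ' _ (m + 2), face_cons_zero,
    face_cons_succ, pow_succ, mul_neg_one, neg_smul, sum_neg_distrib, pow_zero, one_smul]
  abel

theorem dmap_prism_add_prism_dmap (σ : G → G) {m : ℕ} (F : (Fin (m + 2) → G) → V) :
    dmap G V m (prism σ F) + prism σ (dmap G V (m + 1) F) = F - fun x => F (σ ∘ x) := by
  funext x
  simp only [Pi.add_apply, Pi.sub_apply, prism, dmap_apply]
  rw [sum_prism_homotopy m (fun l j => F (prismTuple σ j (face x l)))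
      (fun j i => F (face (prismTuple σ j x) i))
      (fun i j hij hj => by rw [face_prismTuple_of_le σ hij hj])
      (fun i j hji hi => by rw [face_prismTuple_of_lt σ hji hi])
      (fun j => by rw [face_prismTuple_succ]),
    face_prismTuple_zero, face_prismTuple_last]

theorem dmap_contraction_add_contraction_dmap [One G] (σ : G → G) {m : ℕ}
    (F : (Fin (m + 2) → G) → V) :
    dmap G V m (contraction σ F) + contraction σ (dmap G V (m + 1) F) = F := by
  have hcone := dmap_cone_add_cone_dmap (V := V) (fun x => F (σ ∘ x))
  have hprism := dmap_prism_add_prism_dmap σ F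
  rw [dmap_comp_left] at hcone
  simp only [contraction, dmap_add]
  rw [add_add_add_comm, hprism, hcone, sub_add_cancel]

theorem contraction_zero [One G] (σ : G → G) (m : ℕ) :
    contraction σ (0 : (Fin (m + 2) → G) → V) = 0 := by
  funext x
  simp [contraction, prism, cone]

theorem dmap_contraction_of_dmap_eq_zero [One G] (σ : G → G) {m : ℕ}
    {F : (Fin (m + 2) → G) → V} (hF : dmap G V (m + 1) F = 0) :
    dmap G V m (contraction σ F) = F := by
  have h := dmap_contraction_add_contraction_dmap σ F
  rwa [hF, contraction_zero, add_zero] at h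

end Homotopy

theorem aug_injective (G : Type*) [Nonempty G] (V : Type*) : Function.Injective (aug G V) :=
  fun _ _ h => congrFun h (fun _ => Classical.arbitrary G)

theorem dmap_zero_eq_zero_iff {G : Type*} [Nonempty G] {V : Type*} [AddCommGroup V]
    (f : (Fin 1 → G) → V) : dmap G V 0 f = 0 ↔ ∃ v : V, f = aug G V v := by
  constructor
  · intro hf
    obtain ⟨a⟩ := ‹Nonempty G›
    refine ⟨f fun _ => a, funext fun y => ?_⟩
    have hface : face (Fin.cons a y : Fin 2 → G) 1 = fun _ => a := by
      funext t
      fin_cases t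
      rfl
    have := congrFun hf (Fin.cons a y)
    simp only [dmap_apply, sum_range_succ, face_cons_zero, hface] at this
    simpa [aug, add_neg_eq_zero] using this
  · rintro ⟨v, rfl⟩
    funext x
    simp [dmap_apply, aug, sum_range_succ]

section Retraction

variable {G : Type*} [Group G]

noncomputable def retraction (K : Subgroup G) (g : G) : G :=
  g * (QuotientGroup.mk g⁻¹ : G ⧸ K).out * (QuotientGroup.mk 1 : G ⧸ K).out⁻¹

theorem mul_out_inv_mem (K : Subgroup G) (g : G) :
    g * (QuotientGroup.mk g⁻¹ : G ⧸ K).out ∈ K := by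
  obtain ⟨k, hk⟩ := QuotientGroup.mk_out_eq_mul K g⁻¹
  simp [hk]

theorem retraction_mem (K : Subgroup G) (g : G) : retraction K g ∈ K :=
  K.mul_mem (mul_out_inv_mem K g) (K.inv_mem (by simpa using mul_out_inv_mem K 1))

theorem retraction_mul {K : Subgroup G} {k : G} (hk : k ∈ K) (g : G) :
    retraction K (k * g) = k * retraction K g := by
  have : (QuotientGroup.mk (k * g)⁻¹ : G ⧸ K) = QuotientGroup.mk g⁻¹ := by
    rw [QuotientGroup.eq, inv_inv, mul_inv_cancel_right]
    exact hk
  simp only [retraction, this, mul_assoc]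

theorem retraction_one (K : Subgroup G) : retraction K 1 = 1 := by
  simp [retraction]

theorem retraction_of_mem {K : Subgroup G} {k : G} (hk : k ∈ K) : retraction K k = k := by
  simpa [retraction_one] using retraction_mul hk 1

theorem continuous_retraction [TopologicalSpace G] [IsTopologicalGroup G] {K : Subgroup G}
    (hK : IsOpen (K : Set G)) : Continuous (retraction K) := by
  have := QuotientGroup.discreteTopology hK
  exact (continuous_id.mul ((continuous_of_discreteTopology (f := Quotient.out)).comp
    (QuotientGroup.continuous_mk.comp continuous_inv))).mul continuous_const

end Retraction

section Equivariance

variable {G : Type*} [Group G] {V : Type*} [AddCommGroup V] [DistribMulAction G V]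

theorem cAct_add {n : ℕ} (g : G) (F F' : (Fin n → G) → V) :
    cAct G V g (F + F') = cAct G V g F + cAct G V g F' := by
  funext x
  simp [cAct, smul_add]

theorem cAct_dmap (g : G) (n : ℕ) (F : (Fin (n + 1) → G) → V) :
    cAct G V g (dmap G V n F) = dmap G V n (cAct G V g F) := by
  funext x
  simp only [cAct, dmap, smul_sum, smul_comm g]

theorem cAct_comp_left {σ : G → G} {g : G} (hσ : ∀ y, σ (g⁻¹ * y) = g⁻¹ * σ y) {n : ℕ}
    (F : (Fin n → G) → V) :
    cAct G V g (fun x => F (σ ∘ x)) = fun x => cAct G V g F (σ ∘ x) := by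
  funext x
  simp only [cAct, Function.comp_def, hσ]

theorem cAct_prism {σ : G → G} {g : G} (hσ : ∀ y, σ (g⁻¹ * y) = g⁻¹ * σ y) {m : ℕ}
    (F : (Fin (m + 2) → G) → V) : cAct G V g (prism σ F) = prism σ (cAct G V g F) := by
  funext x
  simp only [cAct, prism, smul_sum, smul_comm g, prismTuple_comp_left (τ := (g⁻¹ * ·)) hσ]

theorem cAct_cone (g : G) {m : ℕ} (F : (Fin (m + 2) → G) → V) :
    cAct G V g (cone F) = fun y => cAct G V g F (Fin.cons g y) := by
  funext y
  simp only [cAct, cone]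
  congr 2
  funext i
  cases i using Fin.cases <;> simp

end Equivariance

theorem eventually_forall_eq_of_isCompact {X Y Z : Type*} [TopologicalSpace X]
    [TopologicalSpace Y] [TopologicalSpace Z] [DiscreteTopology Z] {f : X × Y → Z}
    (hf : Continuous f) {S : Set Y} (hS : IsCompact S) (x₀ : X) :
    ∀ᶠ x in 𝓝 x₀, ∀ y ∈ S, f (x, y) = f (x₀, y) := by
  refine hS.eventually_forall_of_forall_eventually fun y _ => ?_
  have hlc := (IsLocallyConstant.iff_continuous f).mpr hf
  have hslice : Continuous fun z : X × Y => f (x₀, z.2) :=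
    hf.comp (continuous_const.prodMk continuous_snd)
  filter_upwards [hlc.eventually_eq (x₀, y),
    ((IsLocallyConstant.iff_continuous _).mpr hslice).eventually_eq (x₀, y)] with z h1 h2
  rw [h1, h2]

section Continuity

variable {G : Type*} [TopologicalSpace G] {V : Type*} [AddCommGroup V] [TopologicalSpace V]
  [DiscreteTopology V]

theorem continuous_dmap {n : ℕ} {F : (Fin (n + 1) → G) → V} (hF : Continuous F) :
    Continuous (dmap G V n F) :=
  continuous_finsetSum _ fun _ _ =>
    (continuous_zsmul _).comp (hF.comp (continuous_pi fun _ => continuous_apply _))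

theorem continuous_contraction [One G] {σ : G → G} (hσ : Continuous σ) {m : ℕ}
    {F : (Fin (m + 2) → G) → V} (hF : Continuous F) : Continuous (contraction σ F) := by
  refine (continuous_finsetSum _ fun j _ =>
    (continuous_zsmul _).comp (hF.comp (continuous_prismTuple hσ j))).add ?_
  exact hF.comp ((continuous_pi fun i => hσ.comp (continuous_apply i)).comp
    (continuous_const.finCons continuous_id))

end Continuity

section Smooth

variable {G : Type*} [Group G] [TopologicalSpace G]
  {V : Type*} [AddCommGroup V] [TopologicalSpace V] [DistribMulAction G V]

theorem isSmoothCochain_aug (hG : LocallyProfinite G) {v : V} (hv : IsOpen {g : G | g • v = v}) :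
    IsSmoothCochain G V (aug G V v) := by
  obtain ⟨K, hKc, hKo, hKv⟩ := hG _ (hv.mem_nhds (one_smul G v))
  refine ⟨continuous_const, K, hKc, hKo, fun g hg => ?_⟩
  funext x
  exact hKv hg

variable [DiscreteTopology V]

theorem IsSmoothCochain.dmap {n : ℕ} {F : (Fin (n + 1) → G) → V} (hF : IsSmoothCochain G V F) :
    IsSmoothCochain G V (dmap G V n F) := by
  obtain ⟨hFc, K, hKc, hKo, hKF⟩ := hF
  exact ⟨continuous_dmap hFc, K, hKc, hKo, fun g hg => by rw [cAct_dmap, hKF g hg]⟩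

theorem exists_isSmoothCochain_contraction [IsTopologicalGroup G] (hG : LocallyProfinite G)
    {m : ℕ} {F : (Fin (m + 2) → G) → V} (hF : IsSmoothCochain G V F) :
    ∃ σ : G → G, IsSmoothCochain G V (contraction σ F) := by
  obtain ⟨hFc, K, hKc, hKo, hKF⟩ := hF
  have hσ : ∀ g ∈ K, ∀ y, retraction K (g⁻¹ * y) = g⁻¹ * retraction K y :=
    fun g hg => retraction_mul (K.inv_mem hg)
  have uniform : ∀ᶠ g in 𝓝 (1 : G), ∀ z ∈ Set.univ.pi fun _ => (K : Set G),
      F (Fin.cons g z) = F (Fin.cons 1 z) :=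
    eventually_forall_eq_of_isCompact
      (f := fun p : G × (Fin (m + 1) → G) => F (Fin.cons p.1 p.2))
      (hFc.comp (continuous_fst.finCons (A := fun _ => G) continuous_snd))
      (isCompact_univ_pi fun _ => hKc) 1
  obtain ⟨K', hK'c, hK'o, hK'⟩ := hG _ (inter_mem uniform (hKo.mem_nhds K.one_mem))
  refine ⟨retraction K, continuous_contraction (continuous_retraction hKo) hFc,
    K', hK'c, hK'o, fun g hg => ?_⟩
  obtain ⟨hg₁, hgK⟩ := hK' hg
  rw [contraction, cAct_add, cAct_prism (hσ g hgK), hKF g hgK, cAct_cone,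
    cAct_comp_left (hσ g hgK), hKF g hgK]
  congr 1
  funext y
  -- `retraction K` fixes `K` pointwise, so the translated cone has vertex `g`, close to `1`.
  show F (retraction K ∘ Fin.cons g y) = F (retraction K ∘ Fin.cons 1 y)
  rw [Fin.comp_cons, Fin.comp_cons, retraction_of_mem hgK, retraction_one]
  exact hg₁ _ fun i _ => retraction_mem K (y i)

end Smooth

theorem smooth_cochain_resolution_exact_general
    {G : Type*} [Group G] [TopologicalSpace G] [IsTopologicalGroup G]
    (hG : LocallyProfinite G)
    {π : Type*} [AddCommGroup π] [TopologicalSpace π] [DiscreteTopology π]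
    [DistribMulAction G π]
    (hsm : ∀ v : π, IsOpen {g : G | g • v = v}) :
    -- the complex and the augmentation take values in smooth vectors
    (∀ v : π, IsSmoothCochain G π (aug G π v)) ∧
    (∀ (n : ℕ) (f : (Fin (n + 1) → G) → π),
        IsSmoothCochain G π f → IsSmoothCochain G π (dmap G π n f)) ∧
    -- exactness at π
    Function.Injective (aug G π) ∧
    -- exactness at C^0(G,π)^sm
    (∀ f : (Fin 1 → G) → π, IsSmoothCochain G π f →
        (dmap G π 0 f = 0 ↔ ∃ v : π, f = aug G π v)) ∧
    -- exactness at C^{n+1}(G,π)^sm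
    (∀ (n : ℕ) (f : (Fin (n + 2) → G) → π), IsSmoothCochain G π f →
        (dmap G π (n + 1) f = 0 ↔
          ∃ h : (Fin (n + 1) → G) → π, IsSmoothCochain G π h ∧ dmap G π n h = f)) := by
  refine ⟨fun v => isSmoothCochain_aug hG (hsm v), fun n f hf => hf.dmap, aug_injective G π,
    fun f _ => dmap_zero_eq_zero_iff f, fun n f hf => ⟨fun hdf => ?_, ?_⟩⟩
  · obtain ⟨σ, hσ⟩ := exists_isSmoothCochain_contraction hG hf
    exact ⟨contraction σ f, hσ, dmap_contraction_of_dmap_eq_zero σ hdf⟩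
  · rintro ⟨h, -, rfl⟩
    exact dmap_dmap n h

/-- **Smooth vectors of the continuous cochain complex give a resolution.**
Let `G` be a locally profinite group, `k` a commutative ring and `π` a smooth
`k`-representation of `G`, regarded as a discrete topological `G`-module. Applying the
smooth-vectors functor `(-)^sm` to the complex of continuous cochains yields an exact
resolution `0 → π → C^0(G,π)^sm → C^1(G,π)^sm → ⋯` of `π` in the category of smooth
`k`-representations of `G`. -/
theorem smooth_cochain_resolution_exact
    {G : Type*} [Group G] [TopologicalSpace G] [IsTopologicalGroup G]
    (hG : LocallyProfinite G)
    {k : Type*} [CommRing k]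
    {π : Type*} [AddCommGroup π] [Module k π] [TopologicalSpace π] [DiscreteTopology π]
    [DistribMulAction G π] [SMulCommClass G k π]
    (hsm : ∀ v : π, IsOpen {g : G | g • v = v}) :
    -- the complex and the augmentation take values in smooth vectors
    (∀ v : π, IsSmoothCochain G π (aug G π v)) ∧
    (∀ (n : ℕ) (f : (Fin (n + 1) → G) → π),
        IsSmoothCochain G π f → IsSmoothCochain G π (dmap G π n f)) ∧
    -- exactness at π
    Function.Injective (aug G π) ∧
    -- exactness at C^0(G,π)^sm
    (∀ f : (Fin 1 → G) → π, IsSmoothCochain G π f →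
        (dmap G π 0 f = 0 ↔ ∃ v : π, f = aug G π v)) ∧
    -- exactness at C^{n+1}(G,π)^sm
    (∀ (n : ℕ) (f : (Fin (n + 2) → G) → π), IsSmoothCochain G π f →
        (dmap G π (n + 1) f = 0 ↔
          ∃ h : (Fin (n + 1) → G) → π, IsSmoothCochain G π h ∧ dmap G π n h = f)) :=
  smooth_cochain_resolution_exact_general hG hsm

end CtsCoh
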